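/- arXiv:1210.3957 — 2 statements merged into one kernel-verified Lean document; each statement's English description precedes it below -/
import Mathlib

section
/- Let q : {(r,r₁) : 0 ≤ r₁ ≤ r} → ℝ satisfy 0 ≤ q(r,r₁) ≤ r − r₁. For k ≥ 1 define a_k(r) = ∫_{r ≥ r₁ ≥ r₂ ≥ ⋯ ≥ r_k ≥ 0} q(r,r₁) q(r₁,r₂) ⋯ q(r_{k−1},r_k) dr₁ ⋯ dr_k. Then 0 ≤ a_k(r) ≤ r^{2k}/(2k)!. -/
/-!
On the simplex `r ≥ x₀ ≥ x₁ ≥ ⋯ ≥ x_k ≥ 0` the integrand is squeezed pointwise between `0` and the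
product of consecutive gaps `(r - x₀)(x₀ - x₁)⋯(x_{k-1} - x_k)`, so it suffices to integrate the
latter. Splitting off the first coordinate `s = x₀` (Fubini) turns the gap integral over the
`(k+1)`-simplex into `∫₀ʳ (r - s) · (gap integral over the k-simplex of size s) ds`, and
`∫₀ʳ (r - s) s^m / m! ds = r^(m+2) / (m+2)!` gives `r^(2k) / (2k)!` by induction.
-/

open MeasureTheory Set
open scoped Nat

def orderedSimplex (k : ℕ) (r : ℝ) : Set (Fin (k + 1) → ℝ) :=
  {x | x 0 ≤ r ∧ (∀ i, 0 ≤ x i) ∧ ∀ i j : Fin (k + 1), i ≤ j → x j ≤ x i}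

/-- The paper's integrand for `a_{k+1}(r)`, with `r_{i+1} = x i`. -/
def kernelProduct (q : ℝ → ℝ → ℝ) (k : ℕ) (r : ℝ) (x : Fin (k + 1) → ℝ) : ℝ :=
  q r (x 0) * ∏ i : Fin k, q (x i.castSucc) (x i.succ)

def gapProduct (k : ℕ) (r : ℝ) : (Fin (k + 1) → ℝ) → ℝ := kernelProduct (· - ·) k r

theorem integral_fin_cons {E : Type*} [NormedAddCommGroup E] [NormedSpace ℝ E] {n : ℕ}
    {f : (Fin (n + 1) → ℝ) → E} (hf : Integrable f) :
    ∫ x, f x = ∫ s, ∫ y, f (Fin.cons s y) := by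
  have e := (volume_preserving_piFinSuccAbove (fun _ : Fin (n + 1) => ℝ) 0).symm
  have hfe := (e.integrable_comp_emb (MeasurableEquiv.measurableEmbedding _)).2 hf
  rw [← e.integral_comp' f, Measure.volume_eq_prod] at *
  exact (integral_prod _ hfe).trans (by
    simp [MeasurableEquiv.piFinSuccAbove_symm_apply, Fin.insertNthEquiv])

theorem setIntegral_sub_mul_pow_div_factorial (m : ℕ) {r : ℝ} (hr : 0 ≤ r) :
    ∫ s in Icc 0 r, (r - s) * (s ^ m / m !) = r ^ (m + 2) / (m + 2)! := by
  have hsplit : ∀ s : ℝ, (r - s) * (s ^ m / m !) = r / m ! * s ^ m - 1 / m ! * s ^ (m + 1) :=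
    fun s => by ring
  simp_rw [integral_Icc_eq_integral_Ioc, ← intervalIntegral.integral_of_le hr, hsplit]
  rw [intervalIntegral.integral_sub
      (intervalIntegral.intervalIntegrable_pow m |>.const_mul _)
      (intervalIntegral.intervalIntegrable_pow (m + 1) |>.const_mul _),
    intervalIntegral.integral_const_mul, intervalIntegral.integral_const_mul, integral_pow,
    integral_pow, Nat.factorial_succ, Nat.factorial_succ]
  push_cast
  field_simp
  ring

theorem setIntegral_mem_Icc_of_forall_mem_Icc {α : Type*} [MeasurableSpace α] {μ : Measure α}
    {s : Set α} {f g : α → ℝ} (hs : MeasurableSet s) (hg : IntegrableOn g s μ)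
    (hfg : ∀ x ∈ s, f x ∈ Icc 0 (g x)) :
    ∫ x in s, f x ∂μ ∈ Icc 0 (∫ x in s, g x ∂μ) :=
  ⟨setIntegral_nonneg hs fun x hx => (hfg x hx).1,
    integral_mono_of_nonneg (ae_restrict_of_forall_mem hs fun x hx => (hfg x hx).1) hg
      (ae_restrict_of_forall_mem hs fun x hx => (hfg x hx).2)⟩

theorem isClosed_orderedSimplex (k : ℕ) (r : ℝ) : IsClosed (orderedSimplex k r) := by
  simp only [orderedSimplex, ofPred_and, ofPred_forall]
  exact (isClosed_le (continuous_apply 0) continuous_const).inter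
    ((isClosed_iInter fun i => isClosed_le continuous_const (continuous_apply i)).inter
      (isClosed_iInter fun i => isClosed_iInter fun j => isClosed_iInter fun _ =>
        isClosed_le (continuous_apply j) (continuous_apply i)))

theorem measurableSet_orderedSimplex (k : ℕ) (r : ℝ) : MeasurableSet (orderedSimplex k r) :=
  (isClosed_orderedSimplex k r).measurableSet

theorem orderedSimplex_subset_Icc (k : ℕ) (r : ℝ) :
    orderedSimplex k r ⊆ Icc 0 (fun _ => r) :=
  fun _ ⟨h0, hnonneg, hanti⟩ => ⟨hnonneg, fun i => (hanti 0 i (Fin.zero_le i)).trans h0⟩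

theorem isCompact_orderedSimplex (k : ℕ) (r : ℝ) : IsCompact (orderedSimplex k r) :=
  isCompact_Icc.of_isClosed_subset (isClosed_orderedSimplex k r) (orderedSimplex_subset_Icc k r)

theorem cons_mem_orderedSimplex_iff {k : ℕ} {r s : ℝ} {y : Fin (k + 1) → ℝ} :
    Fin.cons s y ∈ orderedSimplex (k + 1) r ↔ s ∈ Icc 0 r ∧ y ∈ orderedSimplex k s := by
  simp only [orderedSimplex, mem_ofPred_eq, mem_Icc, Fin.forall_fin_succ, Fin.cons_zero,
    Fin.cons_succ, Fin.succ_le_succ_iff, Fin.zero_le, Fin.le_zero_iff, Fin.succ_ne_zero,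
    forall_const, le_refl, IsEmpty.forall_iff, true_and]
  constructor
  · tauto
  · rintro ⟨hs, hy0, hnonneg, hle0, hanti⟩
    have := fun i => (hle0 i).trans hy0
    tauto

theorem kernelProduct_mem_Icc {q : ℝ → ℝ → ℝ}
    (hq : ∀ r r₁ : ℝ, 0 ≤ r₁ → r₁ ≤ r → 0 ≤ q r r₁ ∧ q r r₁ ≤ r - r₁)
    {k : ℕ} {r : ℝ} {x : Fin (k + 1) → ℝ} (hx : x ∈ orderedSimplex k r) :
    kernelProduct q k r x ∈ Icc 0 (gapProduct k r x) := by
  obtain ⟨h0, hnonneg, hanti⟩ := hx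
  have hfirst := hq r (x 0) (hnonneg 0) h0
  have hstep : ∀ i : Fin k, 0 ≤ q (x i.castSucc) (x i.succ) ∧
      q (x i.castSucc) (x i.succ) ≤ x i.castSucc - x i.succ :=
    fun i => hq _ _ (hnonneg i.succ) (hanti _ _ (Fin.castSucc_le_succ i))
  have hprod : 0 ≤ ∏ i : Fin k, q (x i.castSucc) (x i.succ) :=
    Finset.prod_nonneg fun i _ => (hstep i).1
  exact ⟨mul_nonneg hfirst.1 hprod, mul_le_mul hfirst.2
    (Finset.prod_le_prod (fun i _ => (hstep i).1) fun i _ => (hstep i).2) hprod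
    (hfirst.1.trans hfirst.2)⟩

theorem continuous_gapProduct (k : ℕ) (r : ℝ) : Continuous (gapProduct k r) := by
  unfold gapProduct kernelProduct
  fun_prop

theorem integrableOn_gapProduct (k : ℕ) (r : ℝ) :
    IntegrableOn (gapProduct k r) (orderedSimplex k r) :=
  (continuous_gapProduct k r).continuousOn.integrableOn_compact (isCompact_orderedSimplex k r)

theorem gapProduct_cons (k : ℕ) (r s : ℝ) (y : Fin (k + 1) → ℝ) :
    gapProduct (k + 1) r (Fin.cons s y) = (r - s) * gapProduct k s y := by
  simp only [gapProduct, kernelProduct, Fin.prod_univ_succ, Fin.cons_zero, Fin.cons_succ,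
    Fin.castSucc_zero, ← Fin.succ_castSucc]

theorem indicator_orderedSimplex_cons (k : ℕ) (r s : ℝ) (y : Fin (k + 1) → ℝ) :
    (orderedSimplex (k + 1) r).indicator (gapProduct (k + 1) r) (Fin.cons s y) =
      (Icc 0 r).indicator (fun s => r - s) s *
        (orderedSimplex k s).indicator (gapProduct k s) y := by
  by_cases hs : s ∈ Icc 0 r <;> by_cases hy : y ∈ orderedSimplex k s <;>
    simp [cons_mem_orderedSimplex_iff, gapProduct_cons, hs, hy]

theorem setIntegral_gapProduct_zero (r : ℝ) :
    ∫ x in orderedSimplex 0 r, gapProduct 0 r x = ∫ s in Icc 0 r, (r - s) := by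
  have hS : orderedSimplex 0 r = MeasurableEquiv.funUnique (Fin 1) ℝ ⁻¹' Icc 0 r := by
    ext x
    simp [orderedSimplex, Fin.forall_fin_one, and_comm]
  have hG : gapProduct 0 r = fun x => r - MeasurableEquiv.funUnique (Fin 1) ℝ x := by
    ext x
    simp [gapProduct, kernelProduct]
  rw [hS, hG]
  exact (volume_preserving_funUnique (Fin 1) ℝ).setIntegral_preimage_emb
    (MeasurableEquiv.measurableEmbedding _) (fun s => r - s) _

theorem setIntegral_gapProduct_succ (k : ℕ) (r : ℝ) :
    ∫ x in orderedSimplex (k + 1) r, gapProduct (k + 1) r x =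
      ∫ s in Icc 0 r, (r - s) * ∫ y in orderedSimplex k s, gapProduct k s y := by
  have hint := (integrableOn_gapProduct (k + 1) r).integrable_indicator
    (measurableSet_orderedSimplex (k + 1) r)
  rw [← integral_indicator (measurableSet_orderedSimplex _ _), integral_fin_cons hint,
    ← integral_indicator measurableSet_Icc]
  congr 1 with s
  simp only [indicator_orderedSimplex_cons, integral_const_mul,
    integral_indicator (measurableSet_orderedSimplex k s), indicator_mul_left]

theorem setIntegral_gapProduct (k : ℕ) {r : ℝ} (hr : 0 ≤ r) :
    ∫ x in orderedSimplex k r, gapProduct k r x = r ^ (2 * (k + 1)) / (2 * (k + 1))! := by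
  induction k generalizing r with
  | zero =>
    simpa [setIntegral_gapProduct_zero] using setIntegral_sub_mul_pow_div_factorial 0 hr
  | succ k ih =>
    rw [setIntegral_gapProduct_succ, setIntegral_congr_fun measurableSet_Icc
      (fun s hs => by rw [ih hs.1]), setIntegral_sub_mul_pow_div_factorial _ hr]
    rfl

/-- If `0 ≤ q(r,r₁) ≤ r - r₁` on `{0 ≤ r₁ ≤ r}`, then the iterated
integral `a_k(r)` of `q(r,r₁)q(r₁,r₂)⋯q(r_{k-1},r_k)` over the simplex
`r ≥ r₁ ≥ ⋯ ≥ r_k ≥ 0` satisfies `0 ≤ a_k(r) ≤ r^{2k}/(2k)!` (stated for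
`k = n+1 ≥ 1`). -/
theorem stmt1 (q : ℝ → ℝ → ℝ)
    (hq : ∀ r r₁ : ℝ, 0 ≤ r₁ → r₁ ≤ r → 0 ≤ q r r₁ ∧ q r r₁ ≤ r - r₁)
    (n : ℕ) (r : ℝ) (hr : 0 ≤ r) :
    0 ≤ (∫ x : Fin (n+1) → ℝ in
          {x | x 0 ≤ r ∧ (∀ i, 0 ≤ x i) ∧ ∀ i j : Fin (n+1), i ≤ j → x j ≤ x i},
          q r (x 0) * ∏ i : Fin n, q (x i.castSucc) (x i.succ)) ∧
    (∫ x : Fin (n+1) → ℝ in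
          {x | x 0 ≤ r ∧ (∀ i, 0 ≤ x i) ∧ ∀ i j : Fin (n+1), i ≤ j → x j ≤ x i},
          q r (x 0) * ∏ i : Fin n, q (x i.castSucc) (x i.succ))
      ≤ r ^ (2 * (n + 1)) / (Nat.factorial (2 * (n + 1)) : ℝ) := by
  have h := setIntegral_mem_Icc_of_forall_mem_Icc (measurableSet_orderedSimplex n r)
    (integrableOn_gapProduct n r) fun x hx => kernelProduct_mem_Icc hq hx
  rwa [setIntegral_gapProduct n hr] at h
end

section
/- Let H ≥ 0, g ∈ C_c^∞(ℝ), and let W : ℝ² → ℝ be smooth, even in the second variable, with W(t,t) = −(H²/16)t and W_tt = W_ss − (H²/4)W. Then v(t,s) = (g(s−t) + g(s+t))/2 + ∫_{s−t}^{s+t} W(t, s−s′) g(s′) ds′ satisfies v_tt = v_ss − (H²/4)v with v(0,s) = g(s) and v_t(0,s) = 0. -/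
open intervalIntegral

open MeasureTheory Set Filter Topology Function




lemma hasDerivAt_fst' (F : ℝ → ℝ → ℝ) (hF : ContDiff ℝ (⊤ : ℕ∞) (fun p : ℝ × ℝ => F p.1 p.2))
    (t u : ℝ) :
    HasDerivAt (fun τ => F τ u) (fderiv ℝ (fun p : ℝ × ℝ => F p.1 p.2) (t, u) (1, 0)) t := by
  have h1 : HasFDerivAt (fun p : ℝ × ℝ => F p.1 p.2)
      (fderiv ℝ (fun p : ℝ × ℝ => F p.1 p.2) (t, u)) (t, u) :=
    (hF.differentiable (by simp) (t, u)).hasFDerivAt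
  have h2 : HasDerivAt (fun τ : ℝ => ((τ, u) : ℝ × ℝ)) ((1 : ℝ), (0 : ℝ)) t :=
    (hasDerivAt_id t).prodMk (hasDerivAt_const t u)
  exact h1.comp_hasDerivAt t h2

lemma hasDerivAt_snd' (F : ℝ → ℝ → ℝ) (hF : ContDiff ℝ (⊤ : ℕ∞) (fun p : ℝ × ℝ => F p.1 p.2))
    (t u : ℝ) :
    HasDerivAt (fun σ => F t σ) (fderiv ℝ (fun p : ℝ × ℝ => F p.1 p.2) (t, u) (0, 1)) u := by
  have h1 : HasFDerivAt (fun p : ℝ × ℝ => F p.1 p.2)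
      (fderiv ℝ (fun p : ℝ × ℝ => F p.1 p.2) (t, u)) (t, u) :=
    (hF.differentiable (by simp) (t, u)).hasFDerivAt
  have h2 : HasDerivAt (fun σ : ℝ => ((t, σ) : ℝ × ℝ)) ((0 : ℝ), (1 : ℝ)) u :=
    (hasDerivAt_const u t).prodMk (hasDerivAt_id u)
  exact h1.comp_hasDerivAt u h2

lemma contDiff_pd1 (F : ℝ → ℝ → ℝ) (hF : ContDiff ℝ (⊤ : ℕ∞) (fun p : ℝ × ℝ => F p.1 p.2)) :
    ContDiff ℝ (⊤ : ℕ∞) (fun p : ℝ × ℝ => deriv (fun τ => F τ p.2) p.1) := by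
  have h : (fun p : ℝ × ℝ => deriv (fun τ => F τ p.2) p.1)
      = fun p : ℝ × ℝ => fderiv ℝ (fun q : ℝ × ℝ => F q.1 q.2) p (1, 0) := by
    funext p
    exact (hasDerivAt_fst' F hF p.1 p.2).deriv
  rw [h]
  exact (hF.fderiv_right (by simp)).clm_apply contDiff_const

lemma contDiff_pd2 (F : ℝ → ℝ → ℝ) (hF : ContDiff ℝ (⊤ : ℕ∞) (fun p : ℝ × ℝ => F p.1 p.2)) :
    ContDiff ℝ (⊤ : ℕ∞) (fun p : ℝ × ℝ => deriv (fun σ => F p.1 σ) p.2) := by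
  have h : (fun p : ℝ × ℝ => deriv (fun σ => F p.1 σ) p.2)
      = fun p : ℝ × ℝ => fderiv ℝ (fun q : ℝ × ℝ => F q.1 q.2) p (0, 1) := by
    funext p
    exact (hasDerivAt_snd' F hF p.1 p.2).deriv
  rw [h]
  exact (hF.fderiv_right (by simp)).clm_apply contDiff_const


lemma param_deriv (F : ℝ → ℝ → ℝ) (hF : ContDiff ℝ (⊤ : ℕ∞) (fun p : ℝ × ℝ => F p.1 p.2))
    (c d τ : ℝ) :
    HasDerivAt (fun τ' => ∫ u in c..d, F τ' u)
      (∫ u in c..d, deriv (fun τ' => F τ' u) τ) τ := by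
  have hFtc : Continuous (fun p : ℝ × ℝ => deriv (fun τ' => F τ' p.2) p.1) :=
    (contDiff_pd1 F hF).continuous
  have hK : IsCompact (Icc (τ - 1) (τ + 1) ×ˢ uIcc c d) := isCompact_Icc.prod isCompact_uIcc
  obtain ⟨M, hM⟩ := hK.exists_bound_of_continuousOn hFtc.continuousOn
  have key := intervalIntegral.hasDerivAt_integral_of_dominated_loc_of_deriv_le
    (F := fun τ' u => F τ' u) (F' := fun τ' u => deriv (fun τ'' => F τ'' u) τ')
    (x₀ := τ) (a := c) (b := d) (μ := volume) (bound := fun _ => M)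
    (Metric.ball_mem_nhds τ (by norm_num : (0:ℝ) < 1)) ?_ ?_ ?_ ?_ ?_ ?_
  · exact key.2
  · filter_upwards with x
    exact (hF.continuous.comp (continuous_const.prodMk continuous_id)).aestronglyMeasurable
  · exact ((hF.continuous.comp (continuous_const.prodMk continuous_id))).intervalIntegrable _ _
  · exact (hFtc.comp (continuous_const.prodMk continuous_id)).aestronglyMeasurable
  · filter_upwards with u hu x hx
    apply hM (x, u)
    refine ⟨?_, uIoc_subset_uIcc hu⟩
    have := Metric.mem_ball.1 hx
    rw [Real.dist_eq] at this
    constructor <;> [linarith [abs_le.1 this.le |>.1]; linarith [abs_le.1 this.le |>.2]]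
  · exact intervalIntegrable_const
  · filter_upwards with u hu x hx
    exact ((hasDerivAt_fst' F hF x u).differentiableAt).hasDerivAt

lemma leibniz (F : ℝ → ℝ → ℝ) (hF : ContDiff ℝ (⊤ : ℕ∞) (fun p : ℝ × ℝ => F p.1 p.2))
    (a b : ℝ → ℝ) (a' b' t : ℝ) (hca : Continuous a) (hcb : Continuous b)
    (ha : HasDerivAt a a' t) (hb : HasDerivAt b b' t) :
    HasDerivAt (fun τ => ∫ u in a τ..b τ, F τ u)
      (F t (b t) * b' - F t (a t) * a'
        + ∫ u in a t..b t, deriv (fun τ' => F τ' u) t) t := by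
  have hFc : Continuous (fun p : ℝ × ℝ => F p.1 p.2) := hF.continuous
  have hFtc : Continuous (fun p : ℝ × ℝ => deriv (fun τ' => F τ' p.2) p.1) :=
    (contDiff_pd1 F hF).continuous
  set Ft : ℝ → ℝ → ℝ := fun σ u => deriv (fun τ' => F τ' u) σ with hFt
  -- continuity of Λ
  set Λ : ℝ × ℝ → ℝ := fun p => ∫ u in a p.1..b p.1, Ft p.2 u with hΛdef
  have hΛ : Continuous Λ := by
    have h1 : Λ = fun p : ℝ × ℝ =>
        (∫ u in (0:ℝ)..b p.1, Ft p.2 u) - ∫ u in (0:ℝ)..a p.1, Ft p.2 u := by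
      funext p
      have hint : ∀ (x c d : ℝ), IntervalIntegrable (fun u => Ft x u) volume c d := by
        intro x c d
        apply Continuous.intervalIntegrable
        exact hFtc.comp (continuous_const.prodMk continuous_id)
      exact (integral_interval_sub_left (hint _ _ _) (hint _ _ _)).symm
    rw [h1]
    have hu : Continuous (uncurry fun (p : ℝ × ℝ) u => Ft p.2 u) := by
      have : (uncurry fun (p : ℝ × ℝ) u => Ft p.2 u)
          = (fun q : ℝ × ℝ => Ft q.1 q.2) ∘ (fun q : (ℝ × ℝ) × ℝ => (q.1.2, q.2)) := rfl
      rw [this]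
      exact hFtc.comp (by fun_prop)
    exact (intervalIntegral.continuous_parametric_intervalIntegral_of_continuous hu
        (hcb.comp continuous_fst)).sub
      (intervalIntegral.continuous_parametric_intervalIntegral_of_continuous hu
        (hca.comp continuous_fst))
  -- derivative in the endpoint variable with frozen integrand
  have hφ : ∀ x : ℝ, HasDerivAt (fun y => ∫ u in (0:ℝ)..y, F t u) (F t x) x := by
    intro x
    have hc : Continuous (F t) := hFc.comp (continuous_const.prodMk continuous_id)
    exact intervalIntegral.integral_hasDerivAt_right (hc.intervalIntegrable _ _)
      (hc.stronglyMeasurableAtFilter _ _) hc.continuousAt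
  have hψσ : HasDerivAt (fun σ => ∫ u in a σ..b σ, F t u)
      (F t (b t) * b' - F t (a t) * a') t := by
    have heq : (fun σ => ∫ u in a σ..b σ, F t u)
        = fun σ => (∫ u in (0:ℝ)..b σ, F t u) - ∫ u in (0:ℝ)..a σ, F t u := by
      funext σ
      have hint : ∀ (c d : ℝ), IntervalIntegrable (fun u => F t u) volume c d := by
        intro c d
        apply Continuous.intervalIntegrable
        exact hFc.comp (continuous_const.prodMk continuous_id)
      exact (integral_interval_sub_left (hint _ _) (hint _ _)).symm
    rw [heq]
    exact ((hφ (b t)).comp t hb).sub ((hφ (a t)).comp t ha)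
  -- assembling via slopes
  rw [hasDerivAt_iff_tendsto_slope]
  set ψ : ℝ → ℝ → ℝ := fun σ τ' => ∫ u in a σ..b σ, F τ' u with hψdef
  have key : ∀ σ τ' : ℝ, HasDerivAt (fun τ'' => ψ σ τ'') (Λ (σ, τ')) τ' := fun σ τ' =>
    param_deriv F hF (a σ) (b σ) τ'
  have hS2 : ∀ τ, τ ≠ t → ∃ ξ, |ξ - t| ≤ |τ - t| ∧
      (ψ τ τ - ψ τ t) / (τ - t) = Λ (τ, ξ) := by
    intro τ hτ
    rcases lt_or_gt_of_ne hτ with hlt | hgt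
    · obtain ⟨ξ, hξmem, hξ⟩ := exists_hasDerivAt_eq_slope (fun τ' => ψ τ τ')
        (fun τ' => Λ (τ, τ')) hlt
        (fun x _ => (key τ x).continuousAt.continuousWithinAt)
        (fun x _ => key τ x)
      refine ⟨ξ, ?_, ?_⟩
      · rw [abs_of_nonpos (by linarith [hξmem.2] : ξ - t ≤ 0),
          abs_of_nonpos (by linarith : τ - t ≤ 0)]
        linarith [hξmem.1]
      · rw [hξ, div_eq_div_iff (sub_ne_zero.2 hτ) (sub_ne_zero.2 (Ne.symm hτ))]
        ring
    · obtain ⟨ξ, hξmem, hξ⟩ := exists_hasDerivAt_eq_slope (fun τ' => ψ τ τ')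
        (fun τ' => Λ (τ, τ')) hgt
        (fun x _ => (key τ x).continuousAt.continuousWithinAt)
        (fun x _ => key τ x)
      refine ⟨ξ, ?_, ?_⟩
      · rw [abs_of_nonneg (by linarith [hξmem.1] : (0:ℝ) ≤ ξ - t),
          abs_of_nonneg (by linarith : (0:ℝ) ≤ τ - t)]
        linarith [hξmem.2]
      · exact hξ.symm
  choose! ξ hξ1 hξ2 using hS2
  have hmem : ∀ᶠ τ in 𝓝[≠] t, τ ≠ t := by
    filter_upwards [eventually_mem_nhdsWithin] with τ hτ
    exact hτ
  have htξ : Tendsto ξ (𝓝[≠] t) (𝓝 t) := by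
    rw [tendsto_iff_dist_tendsto_zero]
    apply squeeze_zero' (hmem.mono fun τ _ => dist_nonneg)
      (g := fun τ => |τ - t|) (hmem.mono fun τ hτ => by
        rw [Real.dist_eq]; exact hξ1 τ hτ)
    have h0 : Tendsto (fun τ : ℝ => |τ - t|) (𝓝 t) (𝓝 0) := by
      have hc : Continuous fun τ : ℝ => |τ - t| := (continuous_id.sub continuous_const).abs
      simpa using hc.tendsto t
    exact h0.mono_left nhdsWithin_le_nhds
  have hpair : Tendsto (fun τ => ((τ, ξ τ) : ℝ × ℝ)) (𝓝[≠] t) (𝓝 (t, t)) :=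
    Tendsto.prodMk_nhds (tendsto_id.mono_left nhdsWithin_le_nhds) htξ
  have hS2tend : Tendsto (fun τ => (ψ τ τ - ψ τ t) / (τ - t)) (𝓝[≠] t) (𝓝 (Λ (t, t))) := by
    apply Tendsto.congr' _ ((hΛ.tendsto (t, t)).comp hpair)
    filter_upwards [hmem] with τ hτ
    exact (hξ2 τ hτ).symm
  rw [hasDerivAt_iff_tendsto_slope] at hψσ
  have hfinal := hψσ.add hS2tend
  have hgoal : Tendsto (slope (fun τ => ψ τ τ) t) (𝓝[≠] t)
      (𝓝 (F t (b t) * b' - F t (a t) * a' + Λ (t, t))) := by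
    apply Tendsto.congr' _ hfinal
    filter_upwards [hmem] with τ hτ
    have hτt : τ - t ≠ 0 := sub_ne_zero.2 hτ
    rw [slope_def_field, slope_def_field]
    field_simp
    simp only [hψdef]
    ring
  exact hgoal


lemma tderiv1 (g : ℝ → ℝ) (hg : ContDiff ℝ (⊤ : ℕ∞) g)
    (V : ℝ → ℝ → ℝ) (hV : ContDiff ℝ (⊤ : ℕ∞) (fun p : ℝ × ℝ => V p.1 p.2)) (s τ : ℝ) :
    HasDerivAt (fun t'' => ∫ u in (-t'')..t'', V t'' u * g (s - u))
      (V τ τ * g (s - τ) + V τ (-τ) * g (s + τ)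
        + ∫ u in (-τ)..τ, (deriv (fun τ' => V τ' u) τ) * g (s - u)) τ := by
  have hFj : ContDiff ℝ (⊤ : ℕ∞) (fun p : ℝ × ℝ => V p.1 p.2 * g (s - p.2)) :=
    hV.mul (hg.comp (contDiff_const.sub contDiff_snd))
  have h := leibniz (fun τ' u => V τ' u * g (s - u)) hFj (fun τ' => -τ') (fun τ' => τ')
    (-1) 1 τ continuous_neg continuous_id (hasDerivAt_neg τ) (hasDerivAt_id τ)
  have heq : (∫ u in (-τ)..τ, deriv (fun τ' => V τ' u * g (s - u)) τ)
      = ∫ u in (-τ)..τ, (deriv (fun τ' => V τ' u) τ) * g (s - u) := by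
    apply intervalIntegral.integral_congr
    intro u _
    have h1 := (hasDerivAt_fst' V hV τ u).mul_const (g (s - u))
    show deriv (fun τ' => V τ' u * g (s - u)) τ = deriv (fun τ' => V τ' u) τ * g (s - u)
    rw [h1.deriv, (hasDerivAt_fst' V hV τ u).deriv]
  rw [heq] at h
  convert h using 1
  have : s - -τ = s + τ := by ring
  rw [this]
  ring

lemma sderiv1 (g : ℝ → ℝ) (hg : ContDiff ℝ (⊤ : ℕ∞) g)
    (V : ℝ → ℝ → ℝ) (hV : ContDiff ℝ (⊤ : ℕ∞) (fun p : ℝ × ℝ => V p.1 p.2)) (t σ : ℝ) :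
    HasDerivAt (fun s₂ => ∫ u in (-t)..t, V t u * g (s₂ - u))
      (∫ u in (-t)..t, V t u * deriv g (σ - u)) σ := by
  have hFj : ContDiff ℝ (⊤ : ℕ∞) (fun p : ℝ × ℝ => V t p.2 * g (p.1 - p.2)) :=
    (hV.comp (contDiff_const.prodMk contDiff_snd)).mul
      (hg.comp (contDiff_fst.sub contDiff_snd))
  have h := leibniz (fun σ' u => V t u * g (σ' - u)) hFj (fun _ => -t) (fun _ => t)
    0 0 σ continuous_const continuous_const (hasDerivAt_const σ (-t)) (hasDerivAt_const σ t)
  have heq : (∫ u in (-t)..t, deriv (fun σ' => V t u * g (σ' - u)) σ)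
      = ∫ u in (-t)..t, V t u * deriv g (σ - u) := by
    apply intervalIntegral.integral_congr
    intro u _
    show deriv (fun σ' => V t u * g (σ' - u)) σ = V t u * deriv g (σ - u)
    have h1 : HasDerivAt (fun σ' => V t u * g (σ' - u)) (V t u * (deriv g (σ - u) * 1)) σ :=
      (((hg.differentiable (by simp) (σ - u)).hasDerivAt).comp σ
        ((hasDerivAt_id σ).sub_const u)).const_mul (V t u)
    rw [h1.deriv]
    ring
  rw [heq] at h
  convert h using 1
  ring

lemma ibp_step (V : ℝ → ℝ → ℝ) (hV : ContDiff ℝ (⊤ : ℕ∞) (fun p : ℝ × ℝ => V p.1 p.2))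
    (v v' : ℝ → ℝ) (hv : ∀ x, HasDerivAt v (v' x) x) (hv'c : Continuous v')
    (a b t : ℝ) :
    ∫ u in a..b, V t u * v' u
      = V t b * v b - V t a * v a
        - ∫ u in a..b, deriv (fun σ => V t σ) u * v u := by
  apply intervalIntegral.integral_mul_deriv_eq_deriv_mul
  · intro x _
    exact ((hasDerivAt_snd' V hV t x).differentiableAt).hasDerivAt
  · intro x _
    exact hv x
  · apply Continuous.intervalIntegrable
    have hc : Continuous (fun p : ℝ × ℝ => deriv (fun σ => V p.1 σ) p.2) :=
      (contDiff_pd2 V hV).continuous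
    exact hc.comp (continuous_const.prodMk continuous_id)
  · exact hv'c.intervalIntegrable _ _

section evenodd
variable (W : ℝ → ℝ → ℝ) (hW : ContDiff ℝ (⊤ : ℕ∞) (fun p : ℝ × ℝ => W p.1 p.2))
  (hWeven : ∀ t s : ℝ, W t (-s) = W t s)

include hW hWeven in
lemma ws_odd (τ u : ℝ) :
    deriv (fun σ => W τ σ) (-u) = -(deriv (fun σ => W τ σ) u) := by
  have hWd : ∀ x : ℝ, HasDerivAt (fun σ => W τ σ) (deriv (fun σ => W τ σ) x) x := fun x =>
    ((hasDerivAt_snd' W hW τ x).differentiableAt).hasDerivAt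
  have h1 : HasDerivAt (fun σ => W τ (-σ)) (deriv (fun σ => W τ σ) (-u) * (-1)) u :=
    (hWd (-u)).comp u (hasDerivAt_neg u)
  have h2 : (fun σ : ℝ => W τ (-σ)) = fun σ => W τ σ := funext fun σ => hWeven τ σ
  rw [h2] at h1
  have := h1.unique (hWd u)
  linarith

include hWeven in
lemma wt_even (τ u : ℝ) :
    deriv (fun τ' => W τ' (-u)) τ = deriv (fun τ' => W τ' u) τ := by
  have h2 : (fun τ' : ℝ => W τ' (-u)) = fun τ' => W τ' u := funext fun τ' => hWeven τ' u
  rw [h2]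

include hW in
lemma diag_deriv (H : ℝ) (hWdiag : ∀ t : ℝ, W t t = -(H ^ 2 / 16) * t) (τ : ℝ) :
    deriv (fun τ' => W τ' τ) τ + deriv (fun σ => W τ σ) τ = -(H ^ 2 / 16) := by
  have h1 : HasDerivAt (fun τ' => W τ' τ')
      (fderiv ℝ (fun p : ℝ × ℝ => W p.1 p.2) (τ, τ) ((1:ℝ), (1:ℝ))) τ := by
    have hf : HasFDerivAt (fun p : ℝ × ℝ => W p.1 p.2)
        (fderiv ℝ (fun p : ℝ × ℝ => W p.1 p.2) (τ, τ)) (τ, τ) :=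
      (hW.differentiable (by simp) (τ, τ)).hasFDerivAt
    have hd : HasDerivAt (fun τ' : ℝ => ((τ', τ') : ℝ × ℝ)) ((1:ℝ), (1:ℝ)) τ :=
      (hasDerivAt_id τ).prodMk (hasDerivAt_id τ)
    exact HasFDerivAt.comp_hasDerivAt (f := fun τ' : ℝ => ((τ', τ') : ℝ × ℝ)) τ hf hd
  have hsplit : ((1:ℝ), (1:ℝ)) = ((1:ℝ), (0:ℝ)) + ((0:ℝ), (1:ℝ)) := by simp
  rw [hsplit, map_add] at h1
  have h2 : HasDerivAt (fun τ' : ℝ => -(H ^ 2 / 16) * τ') (-(H ^ 2 / 16)) τ := by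
    simpa using (hasDerivAt_id τ).const_mul (-(H ^ 2 / 16))
  have h3 : (fun τ' : ℝ => W τ' τ') = fun τ' : ℝ => -(H ^ 2 / 16) * τ' :=
    funext fun τ' => hWdiag τ'
  rw [h3] at h1
  have h4 := h1.unique h2
  rw [← h4, (hasDerivAt_fst' W hW τ τ).deriv, (hasDerivAt_snd' W hW τ τ).deriv]
end evenodd

/-- D'Alembert-type formula for the Klein–Gordon equation
`v_tt = v_ss - (H²/4) v` with initial data `v(0,·) = g`, `v_t(0,·) = 0`,
where `g` is smooth with compact support and `W` is a smooth kernel, even in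
the second variable, with `W(t,t) = -(H²/16)t` and `W_tt = W_ss - (H²/4)W`. -/
theorem stmt5 (H : ℝ) (hH : 0 ≤ H)
    (g : ℝ → ℝ) (hg : ContDiff ℝ (⊤ : ℕ∞) g) (hgsupp : HasCompactSupport g)
    (W : ℝ → ℝ → ℝ) (hW : ContDiff ℝ (⊤ : ℕ∞) (fun p : ℝ × ℝ => W p.1 p.2))
    (hWeven : ∀ t s : ℝ, W t (-s) = W t s)
    (hWdiag : ∀ t : ℝ, W t t = -(H ^ 2 / 16) * t)
    (hWpde : ∀ t s : ℝ,
      deriv (fun t' => deriv (fun t'' => W t'' s) t') t =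
        deriv (fun s' => deriv (fun s'' => W t s'') s') s - (H ^ 2 / 4) * W t s) :
    ∀ t s : ℝ,
      (deriv (fun t' => deriv
          (fun t'' => (g (s - t'') + g (s + t'')) / 2 +
            ∫ s' in (s - t'')..(s + t''), W t'' (s - s') * g s') t') t =
        deriv (fun s₁ => deriv
          (fun s₂ => (g (s₂ - t) + g (s₂ + t)) / 2 +
            ∫ s' in (s₂ - t)..(s₂ + t), W t (s₂ - s') * g s') s₁) s
        - (H ^ 2 / 4) * ((g (s - t) + g (s + t)) / 2 +
            ∫ s' in (s - t)..(s + t), W t (s - s') * g s')) ∧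
      ((g (s - 0) + g (s + 0)) / 2 +
          ∫ s' in (s - 0)..(s + 0), W 0 (s - s') * g s') = g s ∧
      deriv (fun t' => (g (s - t') + g (s + t')) / 2 +
          ∫ s' in (s - t')..(s + t'), W t' (s - s') * g s') 0 = 0 := by
  have hderiv_smooth : ∀ f : ℝ → ℝ, ContDiff ℝ (⊤ : ℕ∞) f → ContDiff ℝ (⊤ : ℕ∞) (deriv f) := by
    intro f hf
    have h : deriv f = fun x => fderiv ℝ f x 1 := funext fun x => (fderiv_apply_one_eq_deriv).symm
    rw [h]
    exact (hf.fderiv_right (by simp)).clm_apply contDiff_const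
  have hg1 : ContDiff ℝ (⊤ : ℕ∞) (deriv g) := hderiv_smooth g hg
  have hg2 : ContDiff ℝ (⊤ : ℕ∞) (deriv (deriv g)) := hderiv_smooth (deriv g) hg1
  have hgd : ∀ x, HasDerivAt g (deriv g x) x := fun x =>
    (hg.differentiable (by simp) x).hasDerivAt
  have hg1d : ∀ x, HasDerivAt (deriv g) (deriv (deriv g) x) x := fun x =>
    (hg1.differentiable (by simp) x).hasDerivAt
  have hWtC : ContDiff ℝ (⊤ : ℕ∞) (fun p : ℝ × ℝ => deriv (fun τ => W τ p.2) p.1) :=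
    contDiff_pd1 W hW
  have hWsC : ContDiff ℝ (⊤ : ℕ∞) (fun p : ℝ × ℝ => deriv (fun σ => W p.1 σ) p.2) :=
    contDiff_pd2 W hW
  -- substitution identity
  have hsub : ∀ t s : ℝ, (∫ s' in (s - t)..(s + t), W t (s - s') * g s')
      = ∫ u in (-t)..t, W t u * g (s - u) := by
    intro t s
    have h1 := intervalIntegral.integral_comp_sub_left (a := s - t) (b := s + t)
      (fun u => W t u * g (s - u)) s
    rw [show s - (s + t) = -t by ring, show s - (s - t) = t by ring] at h1
    have h2 : (∫ s' in (s - t)..(s + t), W t (s - s') * g s')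
        = ∫ x in (s - t)..(s + t), W t (s - x) * g (s - (s - x)) := by
      apply intervalIntegral.integral_congr
      intro x _
      show W t (s - x) * g x = W t (s - x) * g (s - (s - x))
      rw [sub_sub_cancel]
    rw [h2]
    exact h1
  -- d'Alembert part, t-derivative
  have hD : ∀ s τ : ℝ, HasDerivAt (fun t'' => (g (s - t'') + g (s + t'')) / 2)
      ((-(deriv g (s - τ)) + deriv g (s + τ)) / 2) τ := by
    intro s τ
    have h1 : HasDerivAt (fun t'' : ℝ => g (s - t'')) (-(deriv g (s - τ))) τ := by
      have := (hgd (s - τ)).comp τ ((hasDerivAt_id τ).const_sub s)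
      exact this.congr_deriv (by ring)
    have h2 : HasDerivAt (fun t'' : ℝ => g (s + t'')) (deriv g (s + τ)) τ := by
      have := (hgd (s + τ)).comp τ ((hasDerivAt_id τ).const_add s)
      exact this.congr_deriv (by ring)
    exact (h1.add h2).div_const 2
  -- full first t-derivative
  have hA : ∀ s τ : ℝ, HasDerivAt
      (fun t'' => (g (s - t'') + g (s + t'')) / 2 +
        ∫ u in (-t'')..t'', W t'' u * g (s - u))
      ((-(deriv g (s - τ)) + deriv g (s + τ)) / 2 +
        ((-(H ^ 2 / 16) * τ) * (g (s - τ) + g (s + τ)) +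
          ∫ u in (-τ)..τ, (deriv (fun τ' => W τ' u) τ) * g (s - u))) τ := by
    intro s τ
    have h2 := tderiv1 g hg W hW s τ
    have h3 : W τ τ * g (s - τ) + W τ (-τ) * g (s + τ)
        = (-(H ^ 2 / 16) * τ) * (g (s - τ) + g (s + τ)) := by
      rw [hWeven τ τ, hWdiag τ]
      ring
    rw [h3] at h2
    exact (hD s τ).add h2
  -- second t-derivative
  have hA2 : ∀ s t : ℝ, HasDerivAt
      (fun τ => (-(deriv g (s - τ)) + deriv g (s + τ)) / 2 +
        ((-(H ^ 2 / 16) * τ) * (g (s - τ) + g (s + τ)) +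
          ∫ u in (-τ)..τ, (deriv (fun τ' => W τ' u) τ) * g (s - u)))
      ((deriv (deriv g) (s - t) + deriv (deriv g) (s + t)) / 2 +
        ((-(H ^ 2 / 16)) * (g (s - t) + g (s + t)) +
          (-(H ^ 2 / 16) * t) * (-(deriv g (s - t)) + deriv g (s + t)) +
          (deriv (fun τ' => W τ' t) t * g (s - t) + deriv (fun τ' => W τ' t) t * g (s + t) +
            ∫ u in (-t)..t, (deriv (fun t' => deriv (fun t'' => W t'' u) t') t) * g (s - u)))) t := by
    intro s t
    have hgm : HasDerivAt (fun τ : ℝ => g (s - τ)) (-(deriv g (s - t))) t := by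
      have := (hgd (s - t)).comp t ((hasDerivAt_id t).const_sub s)
      exact this.congr_deriv (by ring)
    have hgp : HasDerivAt (fun τ : ℝ => g (s + τ)) (deriv g (s + t)) t := by
      have := (hgd (s + t)).comp t ((hasDerivAt_id t).const_add s)
      exact this.congr_deriv (by ring)
    have hg1m : HasDerivAt (fun τ : ℝ => deriv g (s - τ)) (-(deriv (deriv g) (s - t))) t := by
      have := (hg1d (s - t)).comp t ((hasDerivAt_id t).const_sub s)
      exact this.congr_deriv (by ring)
    have hg1p : HasDerivAt (fun τ : ℝ => deriv g (s + τ)) (deriv (deriv g) (s + t)) t := by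
      have := (hg1d (s + t)).comp t ((hasDerivAt_id t).const_add s)
      exact this.congr_deriv (by ring)
    have c1 : HasDerivAt (fun τ => (-(deriv g (s - τ)) + deriv g (s + τ)) / 2)
        ((deriv (deriv g) (s - t) + deriv (deriv g) (s + t)) / 2) t := by
      have := (hg1m.neg.add hg1p).div_const 2
      exact this.congr_deriv (by ring)
    have c2 : HasDerivAt (fun τ : ℝ => (-(H ^ 2 / 16) * τ) * (g (s - τ) + g (s + τ)))
        ((-(H ^ 2 / 16)) * (g (s - t) + g (s + t)) +
          (-(H ^ 2 / 16) * t) * (-(deriv g (s - t)) + deriv g (s + t))) t := by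
      have ha : HasDerivAt (fun τ : ℝ => -(H ^ 2 / 16) * τ) (-(H ^ 2 / 16)) t := by
        simpa using (hasDerivAt_id t).const_mul (-(H ^ 2 / 16))
      exact ha.mul (hgm.add hgp)
    have c3 := tderiv1 g hg (fun τ u => deriv (fun τ' => W τ' u) τ) hWtC s t
    have hevt : (fun τ' : ℝ => W τ' (-t)) = fun τ' => W τ' t :=
      funext fun τ' => hWeven τ' t
    rw [hevt] at c3
    exact c1.add (c2.add c3)
  -- s-derivatives
  refine fun t s => ⟨?_, ?_, ?_⟩
  · -- the PDE
    have hBD : ∀ (f : ℝ → ℝ), ContDiff ℝ (⊤ : ℕ∞) f → ∀ σ : ℝ,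
        HasDerivAt (fun s₂ => (f (s₂ - t) + f (s₂ + t)) / 2)
          ((deriv f (σ - t) + deriv f (σ + t)) / 2) σ := by
      intro f hf σ
      have hfd : ∀ x, HasDerivAt f (deriv f x) x := fun x =>
        (hf.differentiable (by simp) x).hasDerivAt
      have h1 : HasDerivAt (fun s₂ : ℝ => f (s₂ - t)) (deriv f (σ - t)) σ := by
        have := (hfd (σ - t)).comp σ ((hasDerivAt_id σ).sub_const t)
        exact this.congr_deriv (by ring)
      have h2 : HasDerivAt (fun s₂ : ℝ => f (s₂ + t)) (deriv f (σ + t)) σ := by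
        have := (hfd (σ + t)).comp σ ((hasDerivAt_id σ).add_const t)
        exact this.congr_deriv (by ring)
      exact (h1.add h2).div_const 2
    have hB : ∀ σ : ℝ, HasDerivAt
        (fun s₂ => (g (s₂ - t) + g (s₂ + t)) / 2 + ∫ u in (-t)..t, W t u * g (s₂ - u))
        ((deriv g (σ - t) + deriv g (σ + t)) / 2 +
          ∫ u in (-t)..t, W t u * deriv g (σ - u)) σ := fun σ =>
      (hBD g hg σ).add (sderiv1 g hg W hW t σ)
    have hB2 : HasDerivAt
        (fun σ => (deriv g (σ - t) + deriv g (σ + t)) / 2 +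
          ∫ u in (-t)..t, W t u * deriv g (σ - u))
        ((deriv (deriv g) (s - t) + deriv (deriv g) (s + t)) / 2 +
          ∫ u in (-t)..t, W t u * deriv (deriv g) (s - u)) s :=
      (hBD (deriv g) hg1 s).add (sderiv1 (deriv g) hg1 W hW t s)
    -- rewrite the two iterated derivatives
    have hfun1 : (fun t' => deriv
        (fun t'' => (g (s - t'') + g (s + t'')) / 2 +
          ∫ s' in (s - t'')..(s + t''), W t'' (s - s') * g s') t')
        = fun τ => (-(deriv g (s - τ)) + deriv g (s + τ)) / 2 +
            ((-(H ^ 2 / 16) * τ) * (g (s - τ) + g (s + τ)) +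
              ∫ u in (-τ)..τ, (deriv (fun τ' => W τ' u) τ) * g (s - u)) := by
      funext τ
      have hin : (fun t'' => (g (s - t'') + g (s + t'')) / 2 +
          ∫ s' in (s - t'')..(s + t''), W t'' (s - s') * g s')
          = fun t'' => (g (s - t'') + g (s + t'')) / 2 +
            ∫ u in (-t'')..t'', W t'' u * g (s - u) :=
        funext fun t'' => by rw [hsub t'' s]
      rw [hin, (hA s τ).deriv]
    have hfun2 : (fun s₁ => deriv
        (fun s₂ => (g (s₂ - t) + g (s₂ + t)) / 2 +
          ∫ s' in (s₂ - t)..(s₂ + t), W t (s₂ - s') * g s') s₁)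
        = fun σ => (deriv g (σ - t) + deriv g (σ + t)) / 2 +
            ∫ u in (-t)..t, W t u * deriv g (σ - u) := by
      funext σ
      have hin : (fun s₂ => (g (s₂ - t) + g (s₂ + t)) / 2 +
          ∫ s' in (s₂ - t)..(s₂ + t), W t (s₂ - s') * g s')
          = fun s₂ => (g (s₂ - t) + g (s₂ + t)) / 2 +
            ∫ u in (-t)..t, W t u * g (s₂ - u) :=
        funext fun s₂ => by rw [hsub t s₂]
      rw [hin, (hB σ).deriv]
    rw [hfun1, (hA2 s t).deriv, hfun2, hB2.deriv, hsub t s]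
    -- the PDE applied inside the integral
    have hWssC : Continuous (fun u => deriv (fun s' => deriv (fun s'' => W t s'') s') u) := by
      have hc := (contDiff_pd2 (fun τ u => deriv (fun σ => W τ σ) u) hWsC).continuous
      exact hc.comp (continuous_const.prodMk continuous_id)
    have hWc : Continuous (fun u => W t u) :=
      hW.continuous.comp (continuous_const.prodMk continuous_id)
    have hgc : Continuous (fun u => g (s - u)) :=
      hg.continuous.comp (continuous_const.sub continuous_id)
    have i1 : (∫ u in (-t)..t, (deriv (fun t' => deriv (fun t'' => W t'' u) t') t) * g (s - u))
        = (∫ u in (-t)..t, deriv (fun s' => deriv (fun s'' => W t s'') s') u * g (s - u))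
          - H ^ 2 / 4 * ∫ u in (-t)..t, W t u * g (s - u) := by
      have e1 : (∫ u in (-t)..t, (deriv (fun t' => deriv (fun t'' => W t'' u) t') t) * g (s - u))
          = ∫ u in (-t)..t, (deriv (fun s' => deriv (fun s'' => W t s'') s') u * g (s - u)
              - H ^ 2 / 4 * (W t u * g (s - u))) := by
        apply intervalIntegral.integral_congr
        intro u _
        show (deriv (fun t' => deriv (fun t'' => W t'' u) t') t) * g (s - u)
          = deriv (fun s' => deriv (fun s'' => W t s'') s') u * g (s - u)
              - H ^ 2 / 4 * (W t u * g (s - u))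
        rw [hWpde t u]
        ring
      rw [e1, intervalIntegral.integral_sub (f := fun u => deriv (fun s' => deriv (fun s'' => W t s'') s') u * g (s - u))
        (g := fun u => H ^ 2 / 4 * (W t u * g (s - u))) ((hWssC.mul hgc).intervalIntegrable _ _)
        (((continuous_const.mul (hWc.mul hgc))).intervalIntegrable _ _),
        intervalIntegral.integral_const_mul]
    -- integration by parts, twice
    have hv2 : ∀ x : ℝ, HasDerivAt (fun u => -(deriv g (s - u))) (deriv (deriv g) (s - x)) x := by
      intro x
      have := ((hg1d (s - x)).comp x ((hasDerivAt_id x).const_sub s)).neg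
      exact this.congr_deriv (by ring)
    have i2 := ibp_step W hW (fun u => -(deriv g (s - u))) (fun u => deriv (deriv g) (s - u))
      hv2 (hg2.continuous.comp (continuous_const.sub continuous_id)) (-t) t t
    have hv3 : ∀ x : ℝ, HasDerivAt (fun u => g (s - u)) (-(deriv g (s - x))) x := by
      intro x
      have := (hgd (s - x)).comp x ((hasDerivAt_id x).const_sub s)
      exact this.congr_deriv (by ring)
    have i3 := ibp_step (fun τ u => deriv (fun σ => W τ σ) u) hWsC (fun u => g (s - u))
      (fun u => -(deriv g (s - u))) hv3
      ((hg1.continuous.comp (continuous_const.sub continuous_id)).neg) (-t) t t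
    rw [i1, i2, i3]
    have hodd := ws_odd W hW hWeven t t
    have hdiag := diag_deriv W hW H hWdiag t
    have hQ : deriv (fun σ => W t σ) t = -(H ^ 2 / 16) - deriv (fun τ' => W τ' t) t := by
      linarith
    rw [show s - -t = s + t by ring, hWeven t t, hWdiag t, hodd, hQ]
    ring
  · -- initial value
    rw [sub_zero, add_zero, intervalIntegral.integral_same]
    ring
  · -- initial velocity
    have hin : (fun t' => (g (s - t') + g (s + t')) / 2 +
        ∫ s' in (s - t')..(s + t'), W t' (s - s') * g s')
        = fun t' => (g (s - t') + g (s + t')) / 2 +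
          ∫ u in (-t')..t', W t' u * g (s - u) :=
      funext fun t' => by rw [hsub t' s]
    rw [hin, (hA s 0).deriv]
    simp
end
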